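/- Under the bijection φ from Dyck meanders with catastrophes to restricted Dyck paths, the image of the set of Dyck paths of semilength n (meanders with no catastrophes ending at height 0, of length 2n) is exactly the set of Dyck paths of semilength 2n avoiding the factors UUU and DUD everywhere and starting with UUD (or empty). -/

import Mathlib

/-- Every prefix of the path has nonnegative sum (the path stays weakly above the x-axis). -/
def NonnegPrefixes (w : List ℤ) : Prop := ∀ p ∈ w.inits, 0 ≤ p.sum

/-- A Dyck word: steps U = 1 and D = -1, nonnegative prefixes, ending at height 0. -/
def IsDyckWord (w : List ℤ) : Prop :=
  (∀ s ∈ w, s = 1 ∨ s = -1) ∧ NonnegPrefixes w ∧ w.sum = 0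

/-- A Motzkin path: steps U = 1, F = 0, D = -1, nonnegative prefixes, ending at height 0. -/
def IsMotzkinWord (w : List ℤ) : Prop :=
  (∀ s ∈ w, s = 1 ∨ s = 0 ∨ s = -1) ∧ NonnegPrefixes w ∧ w.sum = 0

/-- A Dyck meander with catastrophes: steps U = 1, D = -1, D_i = -i (i ≥ 2),
nonnegative, and every catastrophe step D_i (i ≥ 2) lands exactly at height 0. -/
def IsDyckMeanderCat (w : List ℤ) : Prop :=
  (∀ s ∈ w, s = 1 ∨ s ≤ -1) ∧ NonnegPrefixes w ∧
    ∀ i, i < w.length → w.getD i 0 ≤ -2 → (w.take (i+1)).sum = 0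

/-- A Motzkin meander with catastrophes: steps U = 1, F = 0, D = -1, D_i = -i (i ≥ 2),
nonnegative, every catastrophe landing exactly at height 0. -/
def IsMotzkinMeanderCat (w : List ℤ) : Prop :=
  (∀ s ∈ w, s ≤ 1) ∧ NonnegPrefixes w ∧
    ∀ i, i < w.length → w.getD i 0 ≤ -2 → (w.take (i+1)).sum = 0

def IsDyckExcursionCat (w : List ℤ) : Prop := IsDyckMeanderCat w ∧ w.sum = 0

def IsMotzkinExcursionCat (w : List ℤ) : Prop := IsMotzkinMeanderCat w ∧ w.sum = 0

/-- The factor `pat` occurs in `w` starting at position `i`. -/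
def OccursAt (pat w : List ℤ) (i : ℕ) : Prop := pat <+: w.drop i

/-- `w` has no occurrence of the factor `pat`. -/
def Avoids (pat w : List ℤ) : Prop := ∀ i, ¬ OccursAt pat w i

/-- `w` has no occurrence of `pat` starting at height h > 0. -/
def AvoidsAtPosHeight (pat w : List ℤ) : Prop :=
  ∀ i, OccursAt pat w i → (w.take i).sum ≤ 0

/-- `w` has no occurrence of `pat` starting at height h ≥ 2. -/
def AvoidsAtHeightGe2 (pat w : List ℤ) : Prop :=
  ∀ i, OccursAt pat w i → (w.take i).sum < 2

def pUUU : List ℤ := [1, 1, 1]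
def pDUD : List ℤ := [-1, 1, -1]
def pUUD : List ℤ := [1, 1, -1]
def pUD : List ℤ := [1, -1]
def pDU : List ℤ := [-1, 1]

/-- The recursive equations defining the paper's map φ from Dyck meanders with
catastrophes to Dyck paths:
φ(ε) = ε; φ(Uα) = UD φ(α); φ(UαDβ) = UUD φ(α) D φ(β);
φ(UαD₂β) = U φ(αD) D φ(β); φ(UαD_iβ) = UD φ(αD_{i-1}) φ(β) for i ≥ 3. -/
def PhiSpec (φ : List ℤ → List ℤ) : Prop :=
  (φ [] = []) ∧
  (∀ α : List ℤ, (∀ s ∈ α, s = 1 ∨ s = -1) → NonnegPrefixes α →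
      φ (1 :: α) = 1 :: -1 :: φ α) ∧
  (∀ α β : List ℤ, (∀ s ∈ α, s = 1 ∨ s = -1) → NonnegPrefixes α → α.sum = 0 →
      IsDyckMeanderCat β →
      φ (1 :: (α ++ -1 :: β)) = 1 :: 1 :: -1 :: (φ α ++ -1 :: φ β)) ∧
  (∀ α β : List ℤ, (∀ s ∈ α, s = 1 ∨ s = -1) → NonnegPrefixes α → α.sum = 1 →
      IsDyckMeanderCat β →
      φ (1 :: (α ++ -2 :: β)) = 1 :: (φ (α ++ [-1]) ++ -1 :: φ β)) ∧
  (∀ (α β : List ℤ) (i : ℕ), 3 ≤ i → (∀ s ∈ α, s = 1 ∨ s = -1) → NonnegPrefixes α →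
      α.sum = (i : ℤ) - 1 → IsDyckMeanderCat β →
      φ (1 :: (α ++ (-(i : ℤ)) :: β)) = 1 :: -1 :: (φ (α ++ [-((i : ℤ) - 1)]) ++ φ β))

/-!
On Dyck paths, φ is the substitution `U ↦ UUD`, `D ↦ D`: both satisfy
`φ(UαDβ) = UUD φ(α) D φ(β)`, and the first-return decomposition reaches every Dyck path.
The substitution leaves the height at block boundaries unchanged, so it preserves (and reflects)
being a Dyck path and doubles the semilength. Its image consists of the words that cut into
blocks `UUD` and `D`; reading such a word from the left, a `U` after a `D` (or at the start)
must be followed by `UD`, which is exactly what avoiding `UUU` and `DUD`, starting with `UUD`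
and ending with `D` guarantee.
-/

def NonnegFrom (h : ℤ) (w : List ℤ) : Prop := ∀ p ∈ w.inits, 0 ≤ h + p.sum

@[simp]
theorem nonnegFrom_nil {h : ℤ} : NonnegFrom h [] ↔ 0 ≤ h := by
  simp [NonnegFrom]

@[simp]
theorem nonnegFrom_cons {h s : ℤ} {w : List ℤ} :
    NonnegFrom h (s :: w) ↔ 0 ≤ h ∧ NonnegFrom (h + s) w := by
  simp [NonnegFrom, add_assoc]

theorem NonnegFrom.nonneg {h : ℤ} {w : List ℤ} (hw : NonnegFrom h w) : 0 ≤ h := by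
  simpa using hw [] (by simp)

theorem nonnegFrom_append {h : ℤ} {x y : List ℤ} :
    NonnegFrom h (x ++ y) ↔ NonnegFrom h x ∧ NonnegFrom (h + x.sum) y := by
  induction x generalizing h with
  | nil => simpa using NonnegFrom.nonneg
  | cons s x ih => simp [ih, add_assoc, and_assoc]

theorem nonnegPrefixes_iff_nonnegFrom_zero {w : List ℤ} :
    NonnegPrefixes w ↔ NonnegFrom 0 w := by
  simp [NonnegPrefixes, NonnegFrom]

theorem avoids_cons_iff {p w : List ℤ} {s : ℤ} :
    Avoids p (s :: w) ↔ ¬ p <+: s :: w ∧ Avoids p w := by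
  constructor
  · intro h
    exact ⟨h 0, fun i => h (i + 1)⟩
  · rintro ⟨h₀, h⟩ (_ | i)
    exacts [h₀, h i]

theorem Avoids.of_cons {p w : List ℤ} {s : ℤ} (h : Avoids p (s :: w)) : Avoids p w :=
  (avoids_cons_iff.1 h).2

theorem avoids_nil {p : List ℤ} (hp : p ≠ []) : Avoids p [] := by
  simpa [Avoids, OccursAt] using hp

theorem IsDyckWord.head_eq_one {s : ℤ} {w : List ℤ} (hw : IsDyckWord (s :: w)) : s = 1 := by
  obtain ⟨hs, hnn, -⟩ := hw
  rw [nonnegPrefixes_iff_nonnegFrom_zero, nonnegFrom_cons] at hnn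
  have := hnn.2.nonneg
  rcases hs s (by simp) with rfl | rfl <;> simp_all

theorem IsDyckWord.getLast?_ne_one {w : List ℤ} (hw : IsDyckWord w) : w.getLast? ≠ some 1 := by
  intro hlast
  obtain ⟨u, rfl⟩ := List.getLast?_eq_some_iff.1 hlast
  obtain ⟨-, hnn, hsum⟩ := hw
  rw [nonnegPrefixes_iff_nonnegFrom_zero, nonnegFrom_append] at hnn
  have := hnn.2.nonneg
  rw [List.sum_append, List.sum_singleton] at hsum
  omega

theorem IsDyckWord.isDyckMeanderCat {w : List ℤ} (hw : IsDyckWord w) : IsDyckMeanderCat w := by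
  refine ⟨fun s hs => (hw.1 s hs).imp_right le_of_eq, hw.2.1, fun i hi hle => ?_⟩
  rcases hw.1 _ (List.getD_eq_getElem w 0 hi ▸ List.getElem_mem hi) with h | h <;> omega

/-- First passage of a `±1`-path below its starting height. -/
theorem exists_eq_append_neg_one_cons {h : ℤ} {t : List ℤ} (ht : ∀ s ∈ t, s = 1 ∨ s = -1)
    (h0 : 0 ≤ h) (hneg : h + t.sum < 0) :
    ∃ α β, t = α ++ -1 :: β ∧ NonnegFrom h α ∧ h + α.sum = 0 := by
  induction t generalizing h with
  | nil => simp only [List.sum_nil, add_zero] at hneg; omega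
  | cons s t ih =>
    have hs := ht s (by simp)
    by_cases hdrop : h = 0 ∧ s = -1
    · exact ⟨[], t, by simp [hdrop.2], by simp [h0], by simp [hdrop.1]⟩
    obtain ⟨α, β, rfl, hα, hsum⟩ :=
      ih (fun s' hs' => ht s' (by simp [hs'])) (h := h + s) (by omega) (by simp only [List.sum_cons] at hneg; omega)
    exact ⟨s :: α, β, rfl, nonnegFrom_cons.2 ⟨h0, hα⟩, by simp only [List.sum_cons]; omega⟩

theorem IsDyckWord.exists_eq_cons_append {w : List ℤ} (hw : IsDyckWord w) (hne : w ≠ []) :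
    ∃ α β, IsDyckWord α ∧ IsDyckWord β ∧ w = 1 :: (α ++ -1 :: β) := by
  obtain ⟨s, t, rfl⟩ := List.exists_cons_of_ne_nil hne
  obtain rfl := hw.head_eq_one
  obtain ⟨hs, hnn, hsum⟩ := hw
  obtain ⟨α, β, rfl, hα, hαsum⟩ :=
    exists_eq_append_neg_one_cons (t := t) (fun s hs' => hs s (by simp [hs'])) le_rfl
      (by simp only [List.sum_cons] at hsum; omega)
  rw [nonnegPrefixes_iff_nonnegFrom_zero, nonnegFrom_cons, nonnegFrom_append,
    nonnegFrom_cons, show (0 : ℤ) + 1 + α.sum + -1 = 0 by omega] at hnn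
  simp only [List.mem_cons, List.mem_append, forall_eq_or_imp] at hs
  refine ⟨α, β, ⟨fun s h => hs.2 s (.inl h), nonnegPrefixes_iff_nonnegFrom_zero.2 hα, by omega⟩,
    ⟨fun s h => hs.2 s (.inr (.inr h)), nonnegPrefixes_iff_nonnegFrom_zero.2 hnn.2.2.2, ?_⟩, rfl⟩
  simp only [List.sum_cons, List.sum_append] at hsum
  omega

def expandU : List ℤ → List ℤ
  | [] => []
  | s :: t => if s = 1 then 1 :: 1 :: -1 :: expandU t else s :: expandU t

@[simp]
theorem expandU_nil : expandU [] = [] := rfl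

@[simp]
theorem expandU_one_cons (t : List ℤ) : expandU (1 :: t) = 1 :: 1 :: -1 :: expandU t := rfl

theorem expandU_cons_of_ne {s : ℤ} (hs : s ≠ 1) (t : List ℤ) :
    expandU (s :: t) = s :: expandU t := if_neg hs

@[simp]
theorem sum_expandU (w : List ℤ) : (expandU w).sum = w.sum := by
  induction w with
  | nil => rfl
  | cons s t ih =>
    by_cases hs : s = 1
    · subst hs; simp [ih]
    · simp [expandU_cons_of_ne hs, ih]

@[simp]
theorem expandU_append (x y : List ℤ) : expandU (x ++ y) = expandU x ++ expandU y := by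
  induction x with
  | nil => rfl
  | cons s t ih =>
    by_cases hs : s = 1
    · subst hs; simp [ih]
    · simp [expandU_cons_of_ne hs, ih]

theorem mem_expandU_of_mem {s : ℤ} {w : List ℤ} (h : s ∈ w) : s ∈ expandU w := by
  induction w with
  | nil => simp at h
  | cons a t ih =>
    by_cases ha : a = 1
    · subst ha; aesop
    · rw [expandU_cons_of_ne ha]; aesop

theorem nonnegFrom_expandU_iff {h : ℤ} {w : List ℤ} :
    NonnegFrom h (expandU w) ↔ NonnegFrom h w := by
  induction w generalizing h with
  | nil => rfl
  | cons s t ih =>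
    by_cases hs : s = 1
    · subst hs
      simp only [expandU_one_cons, nonnegFrom_cons, ih]
      constructor
      · rintro ⟨h0, -, -, ht⟩
        exact ⟨h0, by rwa [show h + 1 + 1 + -1 = h + 1 by ring] at ht⟩
      · rintro ⟨h0, ht⟩
        exact ⟨h0, by omega, by omega, by rwa [show h + 1 + 1 + -1 = h + 1 by ring]⟩
    · simp [expandU_cons_of_ne hs, ih]

theorem mem_of_mem_expandU {s : ℤ} {w : List ℤ} (h : s ∈ expandU w) : s ∈ w ∨ s = -1 := by
  induction w with
  | nil => simp at h
  | cons a t ih =>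
    by_cases ha : a = 1
    · subst ha; simp only [expandU_one_cons, List.mem_cons] at h; aesop
    · rw [expandU_cons_of_ne ha] at h; aesop

theorem isDyckWord_expandU_iff {w : List ℤ} : IsDyckWord (expandU w) ↔ IsDyckWord w := by
  simp only [IsDyckWord, nonnegPrefixes_iff_nonnegFrom_zero, nonnegFrom_expandU_iff,
    sum_expandU]
  refine and_congr_left fun _ => ⟨fun h s hs => h s (mem_expandU_of_mem hs), fun h s hs => ?_⟩
  exact (mem_of_mem_expandU hs).elim (h s) .inr

theorem length_expandU {w : List ℤ} (hw : ∀ s ∈ w, s = 1 ∨ s = -1) :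
    ((expandU w).length : ℤ) = 2 * w.length + w.sum := by
  induction w with
  | nil => rfl
  | cons s t ih =>
    have ht := ih fun s' hs' => hw s' (by simp [hs'])
    rcases hw s (by simp) with rfl | rfl
    · simp only [expandU_one_cons, List.length_cons, List.sum_cons]; omega
    · simp only [expandU_cons_of_ne (show (-1 : ℤ) ≠ 1 by decide), List.length_cons,
        List.sum_cons]
      omega

theorem avoids_UUU_expandU (w : List ℤ) : Avoids pUUU (expandU w) := by
  induction w with
  | nil => exact avoids_nil (by simp [pUUU])
  | cons s t ih =>
    by_cases hs : s = 1
    · subst hs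
      rw [expandU_one_cons, avoids_cons_iff, avoids_cons_iff, avoids_cons_iff]
      refine ⟨?_, ?_, ?_, ih⟩ <;> simp [pUUU]
    · rw [expandU_cons_of_ne hs, avoids_cons_iff]
      exact ⟨by simp [pUUU, Ne.symm hs], ih⟩

theorem avoids_DUD_cons_expandU (s : ℤ) (w : List ℤ) : Avoids pDUD (s :: expandU w) := by
  induction w generalizing s with
  | nil => simp [avoids_cons_iff, avoids_nil, pDUD]
  | cons a t ih =>
    by_cases ha : a = 1
    · subst ha
      rw [expandU_one_cons, avoids_cons_iff, avoids_cons_iff, avoids_cons_iff]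
      refine ⟨?_, ?_, ?_, ih (-1)⟩ <;> simp [pDUD]
    · rw [expandU_cons_of_ne ha, avoids_cons_iff]
      exact ⟨by simp [pDUD, Ne.symm ha], ih a⟩


/-- Prepending `D` makes `DUD`-avoidance also forbid a leading `UD`. -/
theorem exists_expandU_eq {v : List ℤ} (hv : ∀ s ∈ v, s = 1 ∨ s = -1) (hUUU : Avoids pUUU v)
    (hDUD : Avoids pDUD (-1 :: v)) (hlast : v.getLast? ≠ some 1) : ∃ w, expandU w = v := by
  induction hn : v.length using Nat.strong_induction_on generalizing v with
  | _ n ih =>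
  rcases v with _ | ⟨s, t⟩
  · exact ⟨[], rfl⟩
  have ht : ∀ s ∈ t, s = 1 ∨ s = -1 := fun s hs => hv s (by simp [hs])
  have htlast : t.getLast? ≠ some 1 := by
    cases t <;> simp_all [List.getLast?_cons_cons]
  rcases hv s (by simp) with rfl | rfl
  · -- `DUD`, `UUU` and the last letter force `v` to begin with the block `UUD`
    obtain ⟨r, rfl⟩ : ∃ r, t = 1 :: -1 :: r := by
      rcases t with _ | ⟨a, _ | ⟨b, r⟩⟩
      · simp at hlast
      · rcases ht a (by simp) with rfl | rfl
        · simp at hlast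
        · simp [avoids_cons_iff, pDUD] at hDUD
      · rcases ht a (by simp) with rfl | rfl <;> rcases ht b (by simp) with rfl | rfl
        · simp [avoids_cons_iff, pUUU] at hUUU
        · exact ⟨r, rfl⟩
        all_goals simp [avoids_cons_iff, pDUD] at hDUD
    obtain ⟨w, rfl⟩ := ih r.length (by simp only [List.length_cons] at hn; omega)
      (fun s hs => ht s (by simp [hs])) hUUU.of_cons.of_cons.of_cons hDUD.of_cons.of_cons.of_cons
      (by cases r <;> simp_all [List.getLast?_cons_cons]) rfl
    exact ⟨1 :: w, rfl⟩
  · obtain ⟨w, rfl⟩ := ih t.length (by simp only [List.length_cons] at hn; omega) ht hUUU.of_cons hDUD.of_cons htlast rfl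
    exact ⟨-1 :: w, expandU_cons_of_ne (by decide) w⟩

theorem PhiSpec.eq_expandU {φ : List ℤ → List ℤ} (hφ : PhiSpec φ) {w : List ℤ}
    (hw : IsDyckWord w) : φ w = expandU w := by
  induction hn : w.length using Nat.strong_induction_on generalizing w with
  | _ n ih =>
  rcases eq_or_ne w [] with rfl | hne
  · exact hφ.1
  obtain ⟨α, β, hα, hβ, rfl⟩ := hw.exists_eq_cons_append hne
  simp only [List.length_cons, List.length_append] at hn
  rw [hφ.2.2.1 α β hα.1 hα.2.1 hα.2.2 hβ.isDyckMeanderCat, ih _ (by omega) hα rfl,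
    ih _ (by omega) hβ rfl]
  simp [expandU_cons_of_ne (show (-1 : ℤ) ≠ 1 by decide)]

/-- Under the bijection φ, the image of the set of Dyck paths of semilength n is
exactly the set of Dyck paths of semilength 2n avoiding UUU and DUD everywhere and
starting with UUD (or empty). -/
theorem stmt_5 (φ : List ℤ → List ℤ) (hφ : PhiSpec φ) (n : ℕ) :
    φ '' {w | IsDyckWord w ∧ w.length = 2 * n} =
      {w | IsDyckWord w ∧ w.length = 2 * (2 * n) ∧
        Avoids pUUU w ∧ Avoids pDUD w ∧ (w = [] ∨ pUUD <+: w)} := by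
  ext v
  constructor
  · rintro ⟨w, ⟨hw, hwn⟩, rfl⟩
    have hlen := length_expandU hw.1
    rw [hφ.eq_expandU hw]
    refine ⟨isDyckWord_expandU_iff.2 hw, by rw [hw.2.2] at hlen; omega,
      avoids_UUU_expandU w, (avoids_DUD_cons_expandU (-1) w).of_cons, ?_⟩
    rcases w with _ | ⟨s, t⟩
    · exact .inl rfl
    · rw [hw.head_eq_one, expandU_one_cons]
      exact .inr ⟨expandU t, rfl⟩
  · rintro ⟨hv, hlen, hUUU, hDUD, hstart⟩
    have hDUD' : Avoids pDUD (-1 :: v) := by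
      refine avoids_cons_iff.2 ⟨?_, hDUD⟩
      rcases hstart with rfl | ⟨t, rfl⟩ <;> simp [pDUD, pUUD]
    obtain ⟨w, rfl⟩ := exists_expandU_eq hv.1 hUUU hDUD' hv.getLast?_ne_one
    have hw := isDyckWord_expandU_iff.1 hv
    have hwlen := length_expandU hw.1
    rw [hw.2.2] at hwlen
    exact ⟨w, ⟨hw, by omega⟩, hφ.eq_expandU hw⟩
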